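/- arXiv:1103.5406 — 2 statements merged into one kernel-verified Lean document; each statement's English description precedes it below -/
import Mathlib

section
/- Fundamental lemma of the calculus of variations for the (dx)^α integral: let α ∈ (0,1) and g : [0,1] → ℝ be continuous. If ∫₀¹ g(x) h(x) (dx)^α = 0 for every continuous function h : [0,1] → ℝ with h(0) = h(1) = 0, then g is identically zero on [0,1]. -/
open MeasureTheory Set

/-- Jumarie's modified Riemann–Liouville fractional derivative of order `α`:
`f^(α)(x) = (1/Γ(1-α)) · d/dx ∫₀ˣ (x-t)^(-α) (f t - f 0) dt`. -/
noncomputable def jumarie (α : ℝ) (f : ℝ → ℝ) (x : ℝ) : ℝ :=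
  (1 / Real.Gamma (1 - α)) *
    deriv (fun y : ℝ => ∫ t in (0:ℝ)..y, (y - t) ^ (-α) * (f t - f 0)) x

/-- `f` has Jumarie derivative `d` of order `α` at `x`. -/
def HasJumarieDerivAt (α : ℝ) (f : ℝ → ℝ) (d x : ℝ) : Prop :=
  HasDerivAt (fun y : ℝ => ∫ t in (0:ℝ)..y, (y - t) ^ (-α) * (f t - f 0))
    (Real.Gamma (1 - α) * d) x

/-- The `(dt)^α` integral: `∫₀ˣ f(t) (dt)^α = α ∫₀ˣ (x-t)^(α-1) f(t) dt`. -/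
noncomputable def fracInt (α : ℝ) (f : ℝ → ℝ) (x : ℝ) : ℝ :=
  α * ∫ t in (0:ℝ)..x, (x - t) ^ (α - 1) * f t

lemma key_lemma (α : ℝ) (hα : α ∈ Ioo (0:ℝ) 1) (g : ℝ → ℝ)
    (hg : ContinuousOn g (Icc (0:ℝ) 1)) (c : ℝ) (hc : c ∈ Ioo (0:ℝ) 1)
    (hgc : 0 < g c) :
    ∃ h : ℝ → ℝ, ContinuousOn h (Icc (0:ℝ) 1) ∧ h 0 = 0 ∧ h 1 = 0 ∧
      0 < fracInt α (fun x => g x * h x) 1 := by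
  have hc01 : c ∈ Icc (0:ℝ) 1 := Ioo_subset_Icc_self hc
  -- find δ
  have hcw : ContinuousWithinAt g (Icc (0:ℝ) 1) c := hg.continuousWithinAt hc01
  have hev : ∀ᶠ t in nhdsWithin c (Icc (0:ℝ) 1), g c / 2 < g t :=
    hcw.eventually_const_lt (by linarith)
  obtain ⟨δ, hδ, hδ'⟩ := Metric.mem_nhdsWithin_iff.mp hev
  replace hδ' : ∀ t ∈ Icc (0:ℝ) 1, dist t c < δ → g c / 2 < g t := by
    intro t ht hdist
    exact hδ' ⟨Metric.mem_ball.mpr hdist, ht⟩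
  set ε : ℝ := min (δ/2) (min (c/2) ((1-c)/2)) with hε
  have hεpos : 0 < ε := by
    have := hc.1; have := hc.2
    simp only [hε, lt_min_iff]; refine ⟨by linarith, by linarith, by linarith⟩
  have hεδ : ε ≤ δ/2 := min_le_left _ _
  have hεc : ε ≤ c/2 := le_trans (min_le_right _ _) (min_le_left _ _)
  have hεc1 : ε ≤ (1-c)/2 := le_trans (min_le_right _ _) (min_le_right _ _)
  set a : ℝ := c - ε with ha
  set b : ℝ := c + ε with hb
  have hab : a < b := by simp [ha, hb]; linarith
  have ha0 : 0 < a := by simp [ha]; linarith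
  have hb1 : b < 1 := by simp [hb]; linarith
  set h : ℝ → ℝ := fun t => max 0 ((t - a) * (b - t)) with hh
  have hhc : Continuous h := continuous_const.max ((continuous_id.sub continuous_const).mul (continuous_const.sub continuous_id))
  have hh0 : h 0 = 0 := by
    simp only [hh, max_eq_left_iff]
    nlinarith
  have hh1 : h 1 = 0 := by
    simp only [hh, max_eq_left_iff]
    nlinarith
  have hhnonneg : ∀ t, 0 ≤ h t := fun t => le_max_left _ _
  have hhzero_left : ∀ t ∈ Icc (0:ℝ) a, h t = 0 := by
    intro t ht
    simp only [hh, max_eq_left_iff]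
    nlinarith [ht.1, ht.2]
  have hhzero_right : ∀ t ∈ Icc b (1:ℝ), h t = 0 := by
    intro t ht
    simp only [hh, max_eq_left_iff]
    nlinarith [ht.1, ht.2]
  set F : ℝ → ℝ := fun t => (1 - t) ^ (α - 1) * (g t * h t) with hF
  -- F is zero on [0,a] and [b,1]
  have hFzl : EqOn F (fun _ => (0:ℝ)) (Icc (0:ℝ) a) := by
    intro t ht; simp [hF, hhzero_left t ht]
  have hFzr : EqOn F (fun _ => (0:ℝ)) (Icc b (1:ℝ)) := by
    intro t ht; simp [hF, hhzero_right t ht]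
  -- F is continuous on [0,b]
  have hFcont : ContinuousOn F (Icc (0:ℝ) b) := by
    apply ContinuousOn.mul
    · apply ContinuousOn.rpow_const (by fun_prop)
      intro t ht
      left
      have h1 : t < 1 := lt_of_le_of_lt ht.2 hb1
      exact sub_ne_zero.mpr (ne_of_gt (by linarith))
    · exact (hg.mono (Icc_subset_Icc le_rfl hb1.le)).mul hhc.continuousOn
  have hIab : IntervalIntegrable F volume a b :=
    (hFcont.mono (Icc_subset_Icc ha0.le le_rfl)).intervalIntegrable_of_Icc hab.le
  have hI0a : IntervalIntegrable F volume 0 a :=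
    (hFcont.mono (Icc_subset_Icc le_rfl hab.le)).intervalIntegrable_of_Icc ha0.le
  have hIb1 : IntervalIntegrable F volume b 1 := by
    have : ContinuousOn F (Icc b 1) := continuousOn_const.congr hFzr
    exact this.intervalIntegrable_of_Icc hb1.le
  have int0a : (∫ t in (0:ℝ)..a, F t) = 0 := by
    rw [intervalIntegral.integral_congr (g := fun _ => (0:ℝ))
      (by rwa [uIcc_of_le ha0.le])]
    simp
  have intb1 : (∫ t in b..(1:ℝ), F t) = 0 := by
    rw [intervalIntegral.integral_congr (g := fun _ => (0:ℝ))
      (by rwa [uIcc_of_le hb1.le])]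
    simp
  have intab : 0 < ∫ t in a..b, F t := by
    apply intervalIntegral.intervalIntegral_pos_of_pos_on hIab _ hab
    intro t ht
    have ht01 : t ∈ Icc (0:ℝ) 1 := ⟨by linarith [ht.1], by linarith [ht.2]⟩
    have hgt : g c / 2 < g t := by
      apply hδ' t ht01
      rw [Real.dist_eq, abs_lt]
      constructor <;> [skip; skip] <;>
        · simp only [ha, hb] at ht
          cases' ht with h1 h2
          linarith
    have hht : 0 < h t := by
      simp only [hh, lt_max_iff]
      right; nlinarith [ht.1, ht.2]
    have hpow : 0 < (1 - t) ^ (α - 1) := Real.rpow_pos_of_pos (by linarith [ht.2]) _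
    exact mul_pos hpow (mul_pos (by linarith) hht)
  refine ⟨h, hhc.continuousOn, hh0, hh1, ?_⟩
  have : (∫ t in (0:ℝ)..1, F t) = (∫ t in (0:ℝ)..a, F t) + (∫ t in a..b, F t) + (∫ t in b..(1:ℝ), F t) := by
    rw [← intervalIntegral.integral_add_adjacent_intervals (hI0a.trans hIab) hIb1,
        ← intervalIntegral.integral_add_adjacent_intervals hI0a hIab]
  have hintpos : 0 < ∫ t in (0:ℝ)..1, F t := by
    rw [this, int0a, intb1]; linarith
  have : fracInt α (fun x => g x * h x) 1 = α * ∫ t in (0:ℝ)..1, F t := rfl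
  rw [this]
  exact mul_pos hα.1 hintpos


/-- Fundamental lemma of the calculus of variations for the `(dx)^α` integral. -/
theorem fundamental_lemma (α : ℝ) (hα : α ∈ Ioo (0:ℝ) 1) (g : ℝ → ℝ)
    (hg : ContinuousOn g (Icc (0:ℝ) 1))
    (h : ∀ h : ℝ → ℝ, ContinuousOn h (Icc (0:ℝ) 1) → h 0 = 0 → h 1 = 0 →
      fracInt α (fun x => g x * h x) 1 = 0) :
    ∀ x ∈ Icc (0:ℝ) 1, g x = 0 := by
  have hneg : ∀ h : ℝ → ℝ, ContinuousOn h (Icc (0:ℝ) 1) → h 0 = 0 → h 1 = 0 →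
      fracInt α (fun x => (-g) x * h x) 1 = 0 := by
    intro h' hc h0 h1
    have := h h' hc h0 h1
    simp only [fracInt, Pi.neg_apply, neg_mul, mul_neg,
      intervalIntegral.integral_neg] at this ⊢
    simp [this]
  have hinterior : ∀ c ∈ Ioo (0:ℝ) 1, g c = 0 := by
    intro c hc
    by_contra hne
    rcases lt_or_gt_of_ne hne with hlt | hgt
    · obtain ⟨h', hc', h0, h1, hpos⟩ :=
        key_lemma α hα (-g) (hg.neg) c hc (by simpa using hlt)
      exact absurd (hneg h' hc' h0 h1) (ne_of_gt hpos)
    · obtain ⟨h', hc', h0, h1, hpos⟩ := key_lemma α hα g hg c hc hgt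
      exact absurd (h h' hc' h0 h1) (ne_of_gt hpos)
  intro x hx
  rcases eq_or_lt_of_le hx.1 with h0 | h0
  · -- x = 0
    subst h0
    have hcl : (0:ℝ) ∈ closure (Ioo (0:ℝ) 1) := by
      rw [closure_Ioo (by norm_num : (0:ℝ) ≠ 1)]
      exact ⟨le_refl 0, by norm_num⟩
    haveI : (nhdsWithin (0:ℝ) (Ioo (0:ℝ) 1)).NeBot :=
      mem_closure_iff_nhdsWithin_neBot.mp hcl
    have t1 : Filter.Tendsto g (nhdsWithin (0:ℝ) (Ioo (0:ℝ) 1)) (nhds (g 0)) :=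
      (hg.continuousWithinAt hx).mono_left (nhdsWithin_mono _ Ioo_subset_Icc_self)
    have t2 : Filter.Tendsto g (nhdsWithin (0:ℝ) (Ioo (0:ℝ) 1)) (nhds 0) := by
      apply Filter.Tendsto.congr' _ tendsto_const_nhds
      filter_upwards [self_mem_nhdsWithin] with t ht
      exact (hinterior t ht).symm
    exact tendsto_nhds_unique t1 t2
  rcases eq_or_lt_of_le hx.2 with h1 | h1
  · -- x = 1
    subst h1
    have hcl : (1:ℝ) ∈ closure (Ioo (0:ℝ) 1) := by
      rw [closure_Ioo (by norm_num : (0:ℝ) ≠ 1)]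
      exact ⟨by norm_num, le_refl 1⟩
    haveI : (nhdsWithin (1:ℝ) (Ioo (0:ℝ) 1)).NeBot :=
      mem_closure_iff_nhdsWithin_neBot.mp hcl
    have t1 : Filter.Tendsto g (nhdsWithin (1:ℝ) (Ioo (0:ℝ) 1)) (nhds (g 1)) :=
      (hg.continuousWithinAt hx).mono_left (nhdsWithin_mono _ Ioo_subset_Icc_self)
    have t2 : Filter.Tendsto g (nhdsWithin (1:ℝ) (Ioo (0:ℝ) 1)) (nhds 0) := by
      apply Filter.Tendsto.congr' _ tendsto_const_nhds
      filter_upwards [self_mem_nhdsWithin] with t ht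
      exact (hinterior t ht).symm
    exact tendsto_nhds_unique t1 t2
  exact hinterior x ⟨h0, h1⟩
end

section
/- Fundamental lemma with one free endpoint: let α ∈ (0,1) and g : [0,1] → ℝ be continuous. If ∫₀¹ g(x) h(x) (dx)^α = 0 for every continuous h with h(0) = 0 (but h(1) arbitrary), then g ≡ 0 on [0,1]. -/
open MeasureTheory Set Topology Filter

/-- Fundamental lemma with one free endpoint: variations need only vanish at `x = 0`. -/
theorem fundamental_lemma_free_endpoint (α : ℝ) (hα : α ∈ Ioo (0:ℝ) 1) (g : ℝ → ℝ)
    (hg : ContinuousOn g (Icc (0:ℝ) 1))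
    (h : ∀ h : ℝ → ℝ, ContinuousOn h (Icc (0:ℝ) 1) → h 0 = 0 →
      fracInt α (fun x => g x * h x) 1 = 0) :
    ∀ x ∈ Icc (0:ℝ) 1, g x = 0 := by
  obtain ⟨hα0, hα1⟩ := hα
  set F : ℝ → ℝ := fun t => (1 - t) ^ (α - 1) * (g t * (t * g t)) with hF
  -- the key integral is zero
  have hI : (∫ t in (0:ℝ)..1, F t) = 0 := by
    have := h (fun t => t * g t) (continuousOn_id.mul hg) (zero_mul _)
    unfold fracInt at this
    rcases mul_eq_zero.mp this with h1 | h2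
    · exact absurd h1 (ne_of_gt hα0)
    · exact h2
  -- continuity of F on the open interval
  have hFcont : ContinuousOn F (Ioo (0:ℝ) 1) := by
    apply ContinuousOn.mul
    · apply ContinuousOn.rpow_const
      · exact (continuous_const.sub continuous_id).continuousOn
      · intro x hx
        left
        have : (0:ℝ) < 1 - x := by linarith [hx.2]
        exact ne_of_gt this
    · exact ((hg.mono Ioo_subset_Icc_self).mul
        (continuousOn_id.mul (hg.mono Ioo_subset_Icc_self)))
  -- integrability of F on [0,1]
  have hφ : IntervalIntegrable (fun t : ℝ => (1 - t) ^ (α - 1)) volume 0 1 := by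
    have h1 : IntervalIntegrable (fun t : ℝ => t ^ (α - 1)) volume 0 1 :=
      intervalIntegral.intervalIntegrable_rpow' (by linarith)
    simpa using (h1.comp_sub_left 1).symm
  obtain ⟨M, hM⟩ := isCompact_Icc.exists_bound_of_continuousOn
    (hg.mul (continuousOn_id.mul hg) : ContinuousOn (fun t => g t * (t * g t)) (Icc (0:ℝ) 1))
  have hFmeas : AEStronglyMeasurable F (volume.restrict (Ioc (0:ℝ) 1)) := by
    rw [← Measure.restrict_congr_set Ioo_ae_eq_Ioc]
    exact hFcont.aestronglyMeasurable measurableSet_Ioo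
  have hFint : IntervalIntegrable F volume 0 1 := by
    apply IntervalIntegrable.mono_fun' (g := fun t => M * (1 - t) ^ (α - 1))
      (hφ.const_mul M)
    · simpa [Set.uIoc_of_le (zero_le_one : (0:ℝ) ≤ 1)] using hFmeas
    · rw [Set.uIoc_of_le (zero_le_one : (0:ℝ) ≤ 1)]
      filter_upwards [ae_restrict_mem measurableSet_Ioc] with t ht
      have h1t : (0:ℝ) ≤ 1 - t := by linarith [ht.2]
      have hrn : (0:ℝ) ≤ (1 - t) ^ (α - 1) := Real.rpow_nonneg h1t _
      have hb := hM t ⟨le_of_lt ht.1, ht.2⟩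
      calc ‖F t‖ = (1 - t) ^ (α - 1) * ‖g t * (t * g t)‖ := by
            rw [hF]; simp [norm_mul, abs_of_nonneg hrn]
        _ ≤ (1 - t) ^ (α - 1) * M := by
            exact mul_le_mul_of_nonneg_left hb hrn
        _ = M * (1 - t) ^ (α - 1) := mul_comm _ _
  -- F is nonnegative a.e. on (0,1]
  have hFnonneg : 0 ≤ᵐ[volume.restrict (Ioc (0:ℝ) 1)] F := by
    filter_upwards [ae_restrict_mem measurableSet_Ioc] with t ht
    have h1t : (0:ℝ) ≤ 1 - t := by linarith [ht.2]
    have : g t * (t * g t) = t * (g t * g t) := by ring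
    rw [hF]
    simp only [this]
    exact mul_nonneg (Real.rpow_nonneg h1t _)
      (mul_nonneg (le_of_lt ht.1) (mul_self_nonneg _))
  have hae : F =ᵐ[volume.restrict (Ioc (0:ℝ) 1)] 0 :=
    (intervalIntegral.integral_eq_zero_iff_of_le_of_nonneg_ae zero_le_one
      hFnonneg hFint).mp hI
  -- g vanishes on the open interval
  have hIoo : ∀ x ∈ Ioo (0:ℝ) 1, g x = 0 := by
    intro x hx
    by_contra hgx
    have hFx : 0 < F x := by
      rw [hF]
      have h1x : (0:ℝ) < 1 - x := by linarith [hx.2]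
      have : g x * (x * g x) = x * (g x * g x) := by ring
      simp only [this]
      exact mul_pos (Real.rpow_pos_of_pos h1x _)
        (mul_pos hx.1 (mul_self_pos.mpr hgx))
    have hc : ContinuousAt F x := hFcont.continuousAt (Ioo_mem_nhds hx.1 hx.2)
    have hpos : ∀ᶠ y in nhds x, 0 < F y := hc.eventually (eventually_gt_nhds hFx)
    have hmem : ∀ᶠ y in nhds x, y ∈ Ioo (0:ℝ) 1 := Ioo_mem_nhds hx.1 hx.2
    obtain ⟨ε, hε, hball⟩ := Metric.mem_nhds_iff.mp (hpos.and hmem)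
    have hnull : volume.restrict (Ioc (0:ℝ) 1) {t | F t ≠ 0} = 0 := by
      have := hae
      rw [Filter.EventuallyEq, ae_iff] at this
      simpa using this
    have hsub : Metric.ball x ε ⊆ {t | F t ≠ 0} := fun y hy => ne_of_gt (hball hy).1
    have hzero : volume.restrict (Ioc (0:ℝ) 1) (Metric.ball x ε) = 0 :=
      measure_mono_null hsub hnull
    rw [Measure.restrict_apply measurableSet_ball] at hzero
    have hball' : Metric.ball x ε ∩ Ioc (0:ℝ) 1 = Metric.ball x ε := by
      apply inter_eq_self_of_subset_left
      intro y hy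
      have := (hball hy).2
      exact ⟨this.1, le_of_lt this.2⟩
    rw [hball'] at hzero
    exact absurd hzero (ne_of_gt (Metric.measure_ball_pos volume x hε))
  -- extend to endpoints by continuity
  intro x hx
  rcases eq_or_lt_of_le hx.1 with h0 | h0
  · -- x = 0
    subst h0
    have hne : (𝓝[Ioo (0:ℝ) 1] (0:ℝ)).NeBot := by
      apply mem_closure_iff_nhdsWithin_neBot.mp
      rw [closure_Ioo (zero_ne_one)]
      exact ⟨le_refl _, zero_le_one⟩
    have ht1 : Filter.Tendsto g (𝓝[Ioo (0:ℝ) 1] 0) (𝓝 (g 0)) :=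
      (hg.continuousWithinAt ⟨le_refl _, zero_le_one⟩).mono_left
        (nhdsWithin_mono _ Ioo_subset_Icc_self)
    have ht2 : Filter.Tendsto g (𝓝[Ioo (0:ℝ) 1] 0) (𝓝 0) := by
      apply Filter.Tendsto.congr' _ tendsto_const_nhds
      filter_upwards [self_mem_nhdsWithin] with y hy
      exact (hIoo y hy).symm
    exact tendsto_nhds_unique ht1 ht2
  rcases eq_or_lt_of_le hx.2 with h1 | h1
  · -- x = 1
    subst h1
    have hne : (𝓝[Ioo (0:ℝ) 1] (1:ℝ)).NeBot := by
      apply mem_closure_iff_nhdsWithin_neBot.mp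
      rw [closure_Ioo (zero_ne_one)]
      exact ⟨zero_le_one, le_refl _⟩
    have ht1 : Filter.Tendsto g (𝓝[Ioo (0:ℝ) 1] 1) (𝓝 (g 1)) :=
      (hg.continuousWithinAt ⟨zero_le_one, le_refl _⟩).mono_left
        (nhdsWithin_mono _ Ioo_subset_Icc_self)
    have ht2 : Filter.Tendsto g (𝓝[Ioo (0:ℝ) 1] 1) (𝓝 0) := by
      apply Filter.Tendsto.congr' _ tendsto_const_nhds
      filter_upwards [self_mem_nhdsWithin] with y hy
      exact (hIoo y hy).symm
    exact tendsto_nhds_unique ht1 ht2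
  · exact hIoo x ⟨h0, h1⟩
end
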